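/- Let n ≥ 2, N = 2^n, T ≥ 1, and 0 < δ ≤ 2^{−(T+2)}/√(N−1). Set D = T(N−1) and, for t ∈ {1,…,D}, set i(t) = ⌊(t−1)/T⌋ + 1 and x_t = E_{0,i(t)}. Then there exist functions v_t : {−1,1}^{t−1} → ℝ (t = 1,…,D) such that for every sign sequence ε ∈ {−1,1}^D there exists an N-dimensional density matrix ρ satisfying ε_t · (Re Tr(E_{0,i(t)} ρ) − v_t(ε_1,…,ε_{t−1})) ≥ δ for all t ∈ {1,…,D}. That is, the class of all N-dimensional density matrices δ-shatters sequentially a tree of depth T(2^n − 1) labelled by the two-outcome measurements E_{0,i}. -/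

import Mathlib

/-!
Encode the `T` signs queried against `E_{0,j}` as the signed binary number
`x_j = ∑_u ε_u 2^{-(u+1)} ∈ [-1, 1]`. One state realises all `x_j` at once: amplitude `1/√2`
on `e_0` and coherent amplitude `x_j / √(2(N-1))` on each `e_j`, topped up incoherently to
weight `1 / (2(N-1))`, makes `Tr(E_{0,j} ρ)` a constant plus `x_j / (2√(N-1))`. Predicting `x_j`
by its first `s` digits errs in the direction `ε_s` by at least `2^{-T}`, so the margin is
`2^{-T} / (2√(N-1)) ≥ δ`.
-/

open ComplexOrder Matrix Finset

section Dyadic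

lemma sum_Ico_inv_two_pow {s T : ℕ} (h : s ≤ T) :
    ∑ u ∈ Ico s T, (2⁻¹ : ℝ) ^ (u + 1) = 2⁻¹ ^ s - 2⁻¹ ^ T := by
  induction T, h using Nat.le_induction with
  | base => simp
  | succ T hsT ih => rw [sum_Ico_succ_top hsT, ih]; ring

variable {ε : ℕ → ℝ}

lemma abs_sum_Ico_mul_inv_two_pow_le (hε : ∀ u, |ε u| ≤ 1) {s T : ℕ} (h : s ≤ T) :
    |∑ u ∈ Ico s T, ε u * 2⁻¹ ^ (u + 1)| ≤ 2⁻¹ ^ s - 2⁻¹ ^ T := by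
  calc _ ≤ ∑ u ∈ Ico s T, |ε u * 2⁻¹ ^ (u + 1)| := abs_sum_le_sum_abs _ _
    _ ≤ ∑ u ∈ Ico s T, (2⁻¹ : ℝ) ^ (u + 1) := sum_le_sum fun u _ => by
        rw [abs_mul, abs_of_pos (by positivity : (0 : ℝ) < 2⁻¹ ^ (u + 1))]
        exact mul_le_of_le_one_left (by positivity) (hε u)
    _ = _ := sum_Ico_inv_two_pow h

lemma abs_sum_range_mul_inv_two_pow_le_one (hε : ∀ u, |ε u| ≤ 1) (T : ℕ) :
    |∑ u ∈ range T, ε u * 2⁻¹ ^ (u + 1)| ≤ 1 := by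
  have := abs_sum_Ico_mul_inv_two_pow_le hε (Nat.zero_le T)
  rw [← range_eq_Ico, pow_zero] at this
  linarith [pow_pos (by norm_num : (0 : ℝ) < 2⁻¹) T]

/-- The digit `ε s` outweighs all later ones together, by `2⁻¹ ^ T`. -/
lemma inv_two_pow_le_mul_sub_sum_range (hε : ∀ u, |ε u| ≤ 1) {s T : ℕ} (hs : s < T)
    (hεs : |ε s| = 1) :
    (2⁻¹ : ℝ) ^ T ≤ ε s * (∑ u ∈ range T, ε u * 2⁻¹ ^ (u + 1)
      - ∑ u ∈ range s, ε u * 2⁻¹ ^ (u + 1)) := by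
  set tail := ∑ u ∈ Ico (s + 1) T, ε u * 2⁻¹ ^ (u + 1)
  have htail : |ε s * tail| ≤ 2⁻¹ ^ (s + 1) - 2⁻¹ ^ T := by
    rw [abs_mul, hεs, one_mul]
    exact abs_sum_Ico_mul_inv_two_pow_le hε hs
  have hsq : ε s * ε s = 1 := by rw [← abs_mul_abs_self, hεs, one_mul]
  rw [← sum_Ico_eq_sub _ hs.le, sum_eq_sum_Ico_succ_bot hs]
  linear_combination (neg_le_of_abs_le htail) - (2⁻¹ : ℝ) ^ (s + 1) * hsq

lemma inv_two_pow_le_mul_sub_sum_range_block (hε : ∀ u, |ε u| ≤ 1) {T t : ℕ} (hT : 0 < T)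
    (hεt : |ε t| = 1) :
    (2⁻¹ : ℝ) ^ T ≤ ε t * (∑ u ∈ range T, ε (t / T * T + u) * 2⁻¹ ^ (u + 1)
      - ∑ u ∈ range (t % T), ε (t / T * T + u) * 2⁻¹ ^ (u + 1)) := by
  have := inv_two_pow_le_mul_sub_sum_range (ε := fun u => ε (t / T * T + u)) (fun u => hε _)
    (Nat.mod_lt t hT) (by rwa [Nat.div_add_mod'])
  rwa [Nat.div_add_mod'] at this

end Dyadic

section SpokeState

variable {ι : Type*} [DecidableEq ι]

/-- `E_{o,j}`: the projection onto `(e_o + e_j) / √2`. -/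
noncomputable def pairProjection (o j : ι) : Matrix ι ι ℂ :=
  of fun a b => if (a = o ∨ a = j) ∧ (b = o ∨ b = j) then 1 / 2 else 0

variable (o : ι) (a m : ℝ) (x : ι → ℝ)

def spokeAmplitude (i : ι) : ℝ := if i = o then a else m * x i

def spokePadding (i : ι) : ℝ := if i = o then 0 else m ^ 2 * (1 - x i ^ 2)

/-- Amplitude `a` on the hub `o`; on every other `i` the coherent amplitude `m * x i`, padded
with incoherent weight `m ^ 2 * (1 - x i ^ 2)` so that the diagonal entry is `m ^ 2`. -/
def spokeState : Matrix ι ι ℂ :=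
  vecMulVec (fun i => (spokeAmplitude o a m x i : ℂ))
      (star fun i => (spokeAmplitude o a m x i : ℂ)) + diagonal fun i => (spokePadding o m x i : ℂ)

lemma spokeState_apply (i k : ι) : spokeState o a m x i k =
    ((spokeAmplitude o a m x i * spokeAmplitude o a m x k
      + if i = k then spokePadding o m x i else 0 : ℝ) : ℂ) := by
  simp [spokeState, vecMulVec_apply, diagonal_apply, apply_ite (fun r : ℝ => (r : ℂ))]

lemma spokeState_apply_self (i : ι) :
    spokeState o a m x i i = ((if i = o then a ^ 2 else m ^ 2 : ℝ) : ℂ) := by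
  rw [spokeState_apply, if_pos rfl, spokeAmplitude, spokePadding]
  congr 1
  split_ifs <;> ring

variable [Fintype ι]

lemma spokeState_posSemidef (hx : ∀ i, |x i| ≤ 1) : (spokeState o a m x).PosSemidef := by
  refine (posSemidef_vecMulVec_self_star _).add (posSemidef_diagonal_iff.2 fun i => ?_)
  have : 0 ≤ 1 - x i ^ 2 := by nlinarith [abs_le.1 (hx i)]
  rw [Complex.zero_le_real, spokePadding]
  split_ifs <;> positivity

lemma spokeState_trace :
    (spokeState o a m x).trace = ((a ^ 2 + (Fintype.card ι - 1) * m ^ 2 : ℝ) : ℂ) := by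
  have hdiag : ∀ i, (if i = o then a ^ 2 else m ^ 2)
      = (if i = o then a ^ 2 - m ^ 2 else 0) + m ^ 2 := by
    intro i; split_ifs <;> ring
  simp only [trace, Matrix.diag, spokeState_apply_self, ← Complex.ofReal_sum, hdiag,
    sum_add_distrib, sum_ite_eq', mem_univ, if_true, sum_const, card_univ, nsmul_eq_mul]
  congr 1
  ring

lemma trace_pairProjection_mul {j : ι} (hoj : o ≠ j) (ρ : Matrix ι ι ℂ) :
    (pairProjection o j * ρ).trace = (ρ o o + ρ o j + ρ j o + ρ j j) / 2 := by
  have hentry : ∀ a b, pairProjection o j a b * ρ b a = if b ∈ ({o, j} : Finset ι) then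
      (if a ∈ ({o, j} : Finset ι) then ρ b a / 2 else 0) else 0 := by
    intro a b
    simp only [pairProjection, of_apply, mem_insert, mem_singleton]
    split_ifs <;> simp_all [div_eq_inv_mul]
  simp only [trace, Matrix.diag, mul_apply, hentry, sum_ite_mem, univ_inter, sum_pair hoj,
    sum_add_distrib]
  ring

lemma re_trace_pairProjection_mul_spokeState {j : ι} (hoj : o ≠ j) :
    (pairProjection o j * spokeState o a m x).trace.re = (a ^ 2 + m ^ 2) / 2 + a * m * x j := by
  rw [trace_pairProjection_mul o hoj, spokeState_apply_self, spokeState_apply_self,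
    spokeState_apply, spokeState_apply]
  simp only [spokeAmplitude, if_pos, if_neg hoj, if_neg hoj.symm, add_zero]
  norm_cast
  ring

theorem exists_density_re_trace_pairProjection_mul (hι : 1 < Fintype.card ι)
    (hx : ∀ i, |x i| ≤ 1) :
    ∃ ρ : Matrix ι ι ℂ, ρ.PosSemidef ∧ ρ.trace = 1 ∧ ∀ j, o ≠ j →
      (pairProjection o j * ρ).trace.re
        = (1 + (Fintype.card ι - 1 : ℝ)⁻¹) / 4 + x j / (2 * √(Fintype.card ι - 1)) := by
  set K : ℝ := Fintype.card ι - 1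
  have hK : 0 < K := by
    have : (1 : ℝ) < Fintype.card ι := by exact_mod_cast hι
    linarith
  refine ⟨spokeState o (√2)⁻¹ (√(2 * K))⁻¹ x, spokeState_posSemidef _ _ _ _ hx, ?_,
    fun j hoj => ?_⟩
  · rw [spokeState_trace, ← Complex.ofReal_one, Complex.ofReal_inj]
    change (√2)⁻¹ ^ 2 + K * (√(2 * K))⁻¹ ^ 2 = 1
    rw [inv_pow, inv_pow, Real.sq_sqrt zero_le_two, Real.sq_sqrt (by positivity)]
    field_simp
    ring
  · rw [re_trace_pairProjection_mul_spokeState _ _ _ _ hoj, inv_pow, inv_pow,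
      Real.sq_sqrt zero_le_two, Real.sq_sqrt (by positivity), Real.sqrt_mul zero_le_two]
    field_simp
    rw [Real.sq_sqrt zero_le_two]
    ring

end SpokeState

theorem mixed_states_E0i_shattering_general (n T N D : ℕ) (hn : 2 ≤ n) (hT : 1 ≤ T)
    (hN : N = 2 ^ n) (hD : D = T * (N - 1))
    (δ : ℝ) (hδ : δ ≤ ((2 : ℝ) ^ (T + 2))⁻¹ / Real.sqrt ((N : ℝ) - 1))
    (Em : ℕ → Matrix (Fin N) (Fin N) ℂ)
    (hEm : ∀ j : ℕ, ∀ a b : Fin N,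
      Em j a b = if (a.1 = 0 ∨ a.1 = j) ∧ (b.1 = 0 ∨ b.1 = j) then 1 / 2 else 0) :
    ∃ v : (t : Fin D) → (Fin t.1 → ℝ) → ℝ,
      ∀ ε : Fin D → ℝ, (∀ t, ε t = 1 ∨ ε t = -1) →
        ∃ ρ : Matrix (Fin N) (Fin N) ℂ, ρ.PosSemidef ∧ ρ.trace = 1 ∧
          ∀ t : Fin D,
            ε t * ((Matrix.trace (Em (t.1 / T + 1) * ρ)).re
              - v t (fun s => ε ⟨s.1, s.2.trans t.2⟩)) ≥ δ := by
  have hN2 : 2 ≤ N := hN ▸ Nat.le_self_pow (by omega) 2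
  have : NeZero N := ⟨by omega⟩
  -- the `t`-th query reads binary digit `t % T` of the number encoded on spoke `t / T + 1`
  refine ⟨fun t w => (1 + ((N : ℝ) - 1)⁻¹) / 4 + (∑ u : Fin (t.1 % T),
    w ⟨t.1 / T * T + u, by have := Nat.div_add_mod' t.1 T; omega⟩ * 2⁻¹ ^ (u.1 + 1))
      / (2 * √((N : ℝ) - 1)), fun ε hε => ?_⟩
  set ε' : ℕ → ℝ := fun u => if h : u < D then ε ⟨u, h⟩ else 0
  have hε'_apply : ∀ u (h : u < D), ε ⟨u, h⟩ = ε' u := fun u h => by simp only [ε', dif_pos h]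
  have hε' : ∀ u, |ε' u| ≤ 1 := fun u => by
    unfold ε'
    split_ifs with hu
    · rcases hε ⟨u, hu⟩ with h | h <;> simp [h]
    · simp
  obtain ⟨ρ, hρ, htr, hacc⟩ := exists_density_re_trace_pairProjection_mul (0 : Fin N)
    (fun j => ∑ u ∈ range T, ε' ((j.1 - 1) * T + u) * 2⁻¹ ^ (u + 1))
    (by rw [Fintype.card_fin]; omega)
    fun j => abs_sum_range_mul_inv_two_pow_le_one (fun u => hε' _) T
  refine ⟨ρ, hρ, htr, fun t => ?_⟩
  have hjN : t.1 / T + 1 < N := by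
    have : t.1 / T < N - 1 := Nat.div_lt_of_lt_mul (hD ▸ t.2)
    omega
  have hEj : Em (t.1 / T + 1) = pairProjection 0 ⟨t.1 / T + 1, hjN⟩ := by
    ext a b
    simp only [hEm, pairProjection, of_apply, Fin.ext_iff, Fin.val_zero]
  have hkey := inv_two_pow_le_mul_sub_sum_range_block hε' hT
    (by rw [← hε'_apply _ t.2]; rcases hε t with h | h <;> simp [h])
  rw [hEj, hacc _ (by simp [Fin.ext_iff]), Fintype.card_fin]
  simp only [hε'_apply, Nat.add_sub_cancel]
  rw [Fin.sum_univ_eq_sum_range (fun u => ε' (t.1 / T * T + u) * 2⁻¹ ^ (u + 1))]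
  calc δ ≤ ((2 : ℝ) ^ (T + 2))⁻¹ / √((N : ℝ) - 1) := hδ
    _ ≤ 2⁻¹ ^ T / (2 * √((N : ℝ) - 1)) := by
      refine le_of_eq_of_le ?_ (half_le_self (by positivity))
      rw [pow_add, mul_inv, ← inv_pow]
      field_simp
    _ ≤ _ := div_le_div_of_nonneg_right hkey (by positivity)
    _ = _ := by ring

/-- For n ≥ 2, N = 2^n, T ≥ 1 and 0 < δ ≤ 2^{−(T+2)}/√(N−1), with D = T(N−1)
    and measurements x_t = E_{0,i(t)} where i(t) = ⌊(t−1)/T⌋ + 1 (0-based: t/T + 1), there are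
    witness functions v_t : {−1,1}^{t−1} → ℝ such that every sign sequence ε ∈ {−1,1}^D is
    realized, with margin δ, by an N-dimensional density matrix ρ:
    ε_t (Re Tr(E_{0,i(t)} ρ) − v_t(ε_1,…,ε_{t−1})) ≥ δ for all t.
    Here E_{0,j} is the matrix with entries 1/2 at positions (a,b) with a,b ∈ {0,j} and 0
    elsewhere, i.e. (1/2)(e_0e_0* + e_je_j* + e_0e_j* + e_je_0*). -/
theorem mixed_states_E0i_shattering (n T N D : ℕ) (hn : 2 ≤ n) (hT : 1 ≤ T)
    (hN : N = 2 ^ n) (hD : D = T * (N - 1))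
    (δ : ℝ) (hδ0 : 0 < δ) (hδ : δ ≤ ((2 : ℝ) ^ (T + 2))⁻¹ / Real.sqrt ((N : ℝ) - 1))
    (Em : ℕ → Matrix (Fin N) (Fin N) ℂ)
    (hEm : ∀ j : ℕ, ∀ a b : Fin N,
      Em j a b = if (a.1 = 0 ∨ a.1 = j) ∧ (b.1 = 0 ∨ b.1 = j) then 1 / 2 else 0) :
    ∃ v : (t : Fin D) → (Fin t.1 → ℝ) → ℝ,
      ∀ ε : Fin D → ℝ, (∀ t, ε t = 1 ∨ ε t = -1) →
        ∃ ρ : Matrix (Fin N) (Fin N) ℂ, ρ.PosSemidef ∧ ρ.trace = 1 ∧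
          ∀ t : Fin D,
            ε t * ((Matrix.trace (Em (t.1 / T + 1) * ρ)).re
              - v t (fun s => ε ⟨s.1, s.2.trans t.2⟩)) ≥ δ :=
  mixed_states_E0i_shattering_general n T N D hn hT hN hD δ hδ Em hEm
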